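/- arXiv:1805.01519 — 5 statements merged into one kernel-verified Lean document; each statement's English description precedes it below -/
import Mathlib

section
/- Let E, E' be 2n×m real matrices with EᵀJE = (E')ᵀJE', where J = [[0, I_n],[−I_n, 0]], and suppose both E, E' have rank m. Then there exists a real symplectic matrix S ∈ Sp(2n,ℝ) (i.e., SᵀJS = J) with E' = SE. -/
/-!
Columns of a full-rank `2n × m` matrix `E` form a linearly independent family in `ℝ²ⁿ`, and
`Eᵀ J E` is the Gram matrix of this family for the symplectic form `ω(x, y) = xᵀ J y`. The claim
is therefore Witt's extension theorem for `ω`: an isometry between the spans of two linearly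
independent families with the same Gram matrix extends to all of `ℝ²ⁿ`. The extension is built
one vector at a time from symplectic transvections `x ↦ x + c ω(x, z) z`. Such a transvection
fixes `z^⊥` and, with `z = y₂ - y₁` and `c = ω(y₁, y₂)⁻¹`, sends `y₁` to `y₂`.
-/

open Matrix

theorem Submodule.exists_mem_apply_ne_zero_and_apply_ne_zero {R M N : Type*} [Semiring R]
    [AddCommMonoid M] [AddCommMonoid N] [Module R M] [Module R N] {W : Submodule R M}
    {f₁ f₂ : M →ₗ[R] N}
    (h₁ : ∃ z ∈ W, f₁ z ≠ 0) (h₂ : ∃ z ∈ W, f₂ z ≠ 0) : ∃ z ∈ W, f₁ z ≠ 0 ∧ f₂ z ≠ 0 := by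
  obtain ⟨z₁, hz₁W, hz₁⟩ := h₁
  obtain ⟨z₂, hz₂W, hz₂⟩ := h₂
  by_cases h₁₂ : f₂ z₁ = 0
  · by_cases h₂₁ : f₁ z₂ = 0
    · exact ⟨z₁ + z₂, W.add_mem hz₁W hz₂W, by simpa [h₂₁], by simpa [h₁₂]⟩
    · exact ⟨z₂, hz₂W, h₂₁, hz₂⟩
  · exact ⟨z₁, hz₁W, hz₁, h₁₂⟩

namespace LinearMap.BilinForm

section CommRing

variable {R M : Type*} [CommRing R] [AddCommGroup M] [Module R M] {B : LinearMap.BilinForm R M}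

theorem Isometry.injective {M' : Type*} [AddCommGroup M'] [Module R M']
    {B' : LinearMap.BilinForm R M'} (f : B →bᵢ B') (hB : B.SeparatingLeft) :
    Function.Injective f := by
  refine (injective_iff_map_eq_zero f).mpr fun x hx => hB x fun y => ?_
  rw [← f.map_app, hx, map_zero, LinearMap.zero_apply]

def symplecticTransvection (hB : B.IsAlt) (z : M) (c : R) : B →bᵢ B where
  toLinearMap := LinearMap.id + (c • B.flip z).smulRight z
  map_app' x y := by
    have hzy : B z y = -B y z := (LinearMap.IsAlt.neg hB y z).symm
    simp only [AddHom.toFun_eq_coe, coe_toAddHom, LinearMap.add_apply, id_coe, id_eq,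
      coe_smulRight, smul_apply, flip_apply, smul_eq_mul, map_add, map_smul, hzy,
      hB.self_eq_zero, mul_zero, add_zero, mul_neg]
    ring

theorem symplecticTransvection_apply (hB : B.IsAlt) (z : M) (c : R) (x : M) :
    symplecticTransvection hB z c x = x + (c * B x z) • z := rfl

end CommRing

variable {K V : Type*} [Field K] [AddCommGroup V] [Module K V] {B : LinearMap.BilinForm K V}

theorem exists_isometry_fixing_apply_eq_of_sub_mem_orthogonal (hB : B.IsAlt)
    {U : Submodule K V} {y₁ y₂ : V} (hU : y₂ - y₁ ∈ B.orthogonal U) (h : B y₁ y₂ ≠ 0) :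
    ∃ g : B →bᵢ B, (∀ v ∈ U, g v = v) ∧ g y₁ = y₂ := by
  refine ⟨symplecticTransvection hB (y₂ - y₁) (B y₁ y₂)⁻¹, fun v hv => ?_, ?_⟩
  · rw [symplecticTransvection_apply, (mem_orthogonal_iff.mp hU v hv : B v (y₂ - y₁) = 0)]
    simp
  · rw [symplecticTransvection_apply, map_sub, hB.self_eq_zero, sub_zero, inv_mul_cancel₀ h,
      one_smul, add_sub_cancel]

variable [FiniteDimensional K V]

theorem exists_mem_orthogonal_apply_ne_zero (hB : B.Nondegenerate) (hB' : B.IsRefl)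
    {U : Submodule K V} {y : V} (hy : y ∉ U) : ∃ z ∈ B.orthogonal U, B z y ≠ 0 := by
  rw [← B.orthogonal_orthogonal hB hB' U, mem_orthogonal_iff] at hy
  push Not at hy
  exact hy

theorem exists_isometry_fixing_apply_eq_of_notMem (hB : B.Nondegenerate) (hB' : B.IsAlt)
    {U : Submodule K V} {y₁ y₂ : V} (h₁ : y₁ ∉ U) (h₂ : y₂ ∉ U)
    (h : ∀ v ∈ U, B v y₁ = B v y₂) :
    ∃ g : B →bᵢ B, (∀ v ∈ U, g v = v) ∧ g y₁ = y₂ := by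
  have hy : y₂ - y₁ ∈ B.orthogonal U := mem_orthogonal_iff.mpr fun v hv => by
    simp [h v hv]
  obtain hy₁₂ | hy₁₂ := ne_or_eq (B y₁ y₂) 0
  · exact exists_isometry_fixing_apply_eq_of_sub_mem_orthogonal hB' hy hy₁₂
  -- No single transvection works: pass through `y₁ + z` for a `z ⊥ U` pairing nontrivially
  -- with both `y₁` and `y₂`.
  obtain ⟨z, hzU, hzy₁, hzy₂⟩ := Submodule.exists_mem_apply_ne_zero_and_apply_ne_zero
    (f₁ := B.flip y₁) (f₂ := B.flip y₂)
    (exists_mem_orthogonal_apply_ne_zero hB hB'.isRefl h₁)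
    (exists_mem_orthogonal_apply_ne_zero hB hB'.isRefl h₂)
  obtain ⟨g₁, hg₁U, hg₁⟩ := exists_isometry_fixing_apply_eq_of_sub_mem_orthogonal hB'
    (y₁ := y₁) (y₂ := y₁ + z) (by simpa using hzU)
    (by simpa [hB'.self_eq_zero, ← LinearMap.IsAlt.neg hB' z y₁] using hzy₁)
  obtain ⟨g₂, hg₂U, hg₂⟩ := exists_isometry_fixing_apply_eq_of_sub_mem_orthogonal hB'
    (y₁ := y₁ + z) (y₂ := y₂) (by simpa [sub_add_eq_sub_sub] using sub_mem hy hzU)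
    (by simpa [hy₁₂] using hzy₂)
  exact ⟨g₂.comp g₁, fun v hv => by simp [hg₁U v hv, hg₂U v hv], by simp [hg₁, hg₂]⟩

theorem exists_isometry_apply_eq_of_linearIndependent (hB : B.Nondegenerate) (hB' : B.IsAlt)
    {m : ℕ} {u u' : Fin m → V} (hu : LinearIndependent K u) (hu' : LinearIndependent K u')
    (h : ∀ i j, B (u i) (u j) = B (u' i) (u' j)) :
    ∃ f : B →bᵢ B, ∀ i, f (u i) = u' i := by
  induction m with
  | zero => exact ⟨.id B, fun i => i.elim0⟩
  | succ k ih =>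
    rw [linearIndependent_finSucc'] at hu hu'
    obtain ⟨f, hf⟩ := ih hu.1 hu'.1 fun i j => h i.castSucc j.castSucc
    set U := Submodule.span K (Set.range (Fin.init u'))
    have hfU : (Submodule.span K (Set.range (Fin.init u))).map f.toLinearMap = U := by
      rw [Submodule.map_span, ← Set.range_comp]
      exact congrArg _ (congrArg _ (funext hf))
    have hf_last : f (u (Fin.last k)) ∉ U := by
      rintro hmem
      rw [← hfU] at hmem
      obtain ⟨a, ha, hfa⟩ := hmem
      rw [f.injective hB.1 hfa] at ha
      exact hu.2 ha
    have hpair : ∀ v ∈ U, B v (f (u (Fin.last k))) = B v (u' (Fin.last k)) := by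
      refine fun v hv => LinearMap.eqOn_span' (f := B.flip (f (u (Fin.last k))))
        (g := B.flip (u' (Fin.last k))) ?_ hv
      rintro _ ⟨i, rfl⟩
      change B (Fin.init u' i) _ = B (Fin.init u' i) _
      conv_lhs => rw [← hf i, Isometry.map_app]
      exact h i.castSucc (Fin.last k)
    obtain ⟨g, hgU, hg⟩ := exists_isometry_fixing_apply_eq_of_notMem hB hB' hf_last hu'.2 hpair
    refine ⟨g.comp f, Fin.lastCases ?_ fun i => ?_⟩
    · simpa using hg
    · change g (f (Fin.init u i)) = Fin.init u' i
      rw [hf i]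
      exact hgU _ (Submodule.subset_span ⟨i, rfl⟩)

end LinearMap.BilinForm

namespace Matrix

theorem isAlt_toBilin'_J (l R : Type*) [Fintype l] [DecidableEq l] [CommRing R] :
    (J l R).toBilin'.IsAlt := fun x => by
  simp [toBilin'_apply, J, Fintype.sum_sum_type, one_apply, mul_comm]

theorem linearIndependent_col_of_rank_eq {K m n : Type*} [Field K] [Fintype m] [Fintype n]
    {A : Matrix m n K} (h : A.rank = Fintype.card n) : LinearIndependent K A.col := by
  rw [linearIndependent_iff_card_eq_finrank_span, Set.finrank, ← rank_eq_finrank_span_cols, h]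

variable {R ι κ : Type*} [CommSemiring R] [Fintype ι] [DecidableEq ι]

theorem transpose_mul_mul_apply [Fintype κ] [DecidableEq κ] (A : Matrix ι ι R)
    (F G : Matrix ι κ R) (i j : κ) :
    (Fᵀ * A * G) i j = A.toBilin' (F.col i) (G.col j) := by
  rw [← toBilin'_single (Fᵀ * A * G), ← toBilin'_comp]
  simp

theorem _root_.LinearMap.BilinForm.Isometry.transpose_toMatrix'_mul_mul_toMatrix'
    {A : Matrix ι ι R} (f : A.toBilin' →bᵢ A.toBilin') :
    (LinearMap.toMatrix' f.toLinearMap)ᵀ * A * LinearMap.toMatrix' f.toLinearMap = A := by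
  apply Matrix.toBilin'.injective
  rw [← toBilin'_comp, toLin'_toMatrix']
  ext x y
  simp

theorem exists_transpose_mul_mul_eq_self_and_eq_mul {K : Type*} [Field K] {m : ℕ}
    {J : Matrix ι ι K} (hJ : J.toBilin'.IsAlt) (hdet : J.det ≠ 0)
    {E E' : Matrix ι (Fin m) K} (hE : E.rank = m) (hE' : E'.rank = m)
    (h : Eᵀ * J * E = E'ᵀ * J * E') :
    ∃ S : Matrix ι ι K, Sᵀ * J * S = J ∧ E' = S * E := by
  obtain ⟨f, hf⟩ := LinearMap.BilinForm.exists_isometry_apply_eq_of_linearIndependent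
    (LinearMap.BilinForm.nondegenerate_toBilin'_iff_det_ne_zero.mpr hdet) hJ
    (linearIndependent_col_of_rank_eq (by simpa using hE))
    (linearIndependent_col_of_rank_eq (by simpa using hE'))
    fun i j => by rw [← transpose_mul_mul_apply, ← transpose_mul_mul_apply, h]
  refine ⟨LinearMap.toMatrix' f.toLinearMap, f.transpose_toMatrix'_mul_mul_toMatrix', ?_⟩
  refine ext_col fun j => ?_
  rw [← hf j, ← LinearMap.BilinForm.Isometry.coe_toLinearMap, ← LinearMap.toMatrix'_mulVec]
  rfl

end Matrix

theorem stmt_7 (n m : ℕ) (E E' : Matrix (Fin n ⊕ Fin n) (Fin m) ℝ)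
    (J : Matrix (Fin n ⊕ Fin n) (Fin n ⊕ Fin n) ℝ)
    (hJ : J = Matrix.fromBlocks 0 1 (-1) 0)
    (hE : E.rank = m) (hE' : E'.rank = m)
    (h : Eᵀ * J * E = E'ᵀ * J * E') :
    ∃ S : Matrix (Fin n ⊕ Fin n) (Fin n ⊕ Fin n) ℝ,
      Sᵀ * J * S = J ∧ E' = S * E := by
  obtain rfl : J = -Matrix.J (Fin n) ℝ := by
    rw [hJ, Matrix.J, fromBlocks_neg]
    simp
  refine exists_transpose_mul_mul_eq_self_and_eq_mul ?_ ?_ hE hE' h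
  · rw [map_neg, LinearMap.BilinForm.isAlt_neg]
    exact isAlt_toBilin'_J _ _
  · rw [det_neg]
    exact mul_ne_zero (pow_ne_zero _ (by norm_num)) (isUnit_det_J _ _).ne_zero
end

section
/- Given two n×m real matrices Q₁, Q₂, each of rank m with m < n, there exists a matrix X ∈ M_{n×(n−m)}(ℝ) such that both block matrices [Q₁ X] and [Q₂ X] (of size n×n) are invertible. -/
/-!
Each `Qᵢ` separately can be completed to an invertible matrix `[Qᵢ Xᵢ]` by taking for the columns
of `Xᵢ` a basis of a complement of the column space of `Qᵢ`. Along the line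
`X = X₁ + t (X₂ - X₁)` both `det [Q₁ X]` and `det [Q₂ X]` are polynomials in `t`, nonzero at
`t = 0` and `t = 1` respectively, so they have finitely many roots and some real `t` avoids all.
-/

open Polynomial

namespace Matrix

theorem fromCols_add_smul {ι κ ν R : Type*} [Semiring R] (Q : Matrix ι κ R) (X D : Matrix ι ν R)
    (t : R) : fromCols Q (X + t • D) = fromCols Q X + t • fromCols 0 D := by
  ext i (k | k) <;> simp

variable {K ι κ ν : Type*} [Field K]

theorem linearIndependent_col_of_rank_eq_card [Fintype κ] {Q : Matrix ι κ K}
    (hQ : Q.rank = Fintype.card κ) : LinearIndependent K Q.col := by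
  rw [linearIndependent_iff_card_eq_finrank_span, ← hQ, rank_eq_finrank_span_cols]
  rfl

variable [Fintype ι] [DecidableEq ι]

theorem exists_isUnit_fromCols_submatrix [Fintype κ] [Fintype ν] (e : κ ⊕ ν ≃ ι)
    {Q : Matrix ι κ K} (hQ : Q.rank = Fintype.card κ) :
    ∃ X : Matrix ι ν K, IsUnit ((fromCols Q X).submatrix id e.symm) := by
  obtain ⟨W, hW⟩ := Submodule.exists_isCompl (Submodule.span K (Set.range Q.col))
  have hWrank : Module.finrank K W = Fintype.card ν := by
    have := Submodule.finrank_add_eq_of_isCompl hW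
    rw [← rank_eq_finrank_span_cols, hQ, Module.finrank_fintype_fun_eq_card,
      ← Fintype.card_congr e, Fintype.card_sum] at this
    omega
  let b : Module.Basis ν K W :=
    (Module.finBasisOfFinrankEq K W hWrank).reindex (Fintype.equivFin ν).symm
  let X : Matrix ι ν K := of fun i j ↦ (b j : ι → K) i
  refine ⟨X, ?_⟩
  rw [← linearIndependent_cols_iff_isUnit]
  refine (linearIndependent_equiv e.symm (f := (fromCols Q X).col)).mpr ?_
  rw [col, transpose_fromCols]
  refine (linearIndependent_col_of_rank_eq_card hQ).sum_type ?_ ?_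
  · exact b.linearIndependent.map' W.subtype W.ker_subtype
  · exact hW.disjoint.mono_right
      (Submodule.span_le.mpr (Set.range_subset_iff.mpr fun j ↦ (b j).2))

theorem eval_det_map_C_add_X_smul (A B : Matrix ι ι K) (t : K) :
    (det (A.map C + (X : K[X]) • B.map C)).eval t = det (A + t • B) := by
  rw [← coe_evalRingHom, RingHom.map_det]
  congr 1
  ext i j
  simp
  ring

theorem finite_setOf_det_add_smul_eq_zero {A B : Matrix ι ι K} {s : K}
    (hs : det (A + s • B) ≠ 0) : {t : K | det (A + t • B) = 0}.Finite := by
  have hp : det (A.map C + (X : K[X]) • B.map C) ≠ 0 := fun h ↦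
    hs (by rw [← eval_det_map_C_add_X_smul, h, eval_zero])
  simpa only [IsRoot, eval_det_map_C_add_X_smul] using finite_setOfPred_isRoot hp

theorem exists_det_add_smul_ne_zero_and [Infinite K] {A₁ B₁ A₂ B₂ : Matrix ι ι K} {s₁ s₂ : K}
    (h₁ : det (A₁ + s₁ • B₁) ≠ 0) (h₂ : det (A₂ + s₂ • B₂) ≠ 0) :
    ∃ t : K, det (A₁ + t • B₁) ≠ 0 ∧ det (A₂ + t • B₂) ≠ 0 := by
  obtain ⟨t, ht⟩ := ((finite_setOf_det_add_smul_eq_zero h₁).union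
    (finite_setOf_det_add_smul_eq_zero h₂)).infinite_compl.nonempty
  exact ⟨t, fun h ↦ ht (Or.inl h), fun h ↦ ht (Or.inr h)⟩

theorem exists_isUnit_fromCols_submatrix_and [Infinite K] (e : κ ⊕ ν ≃ ι)
    {Q₁ Q₂ : Matrix ι κ K} {X₁ X₂ : Matrix ι ν K}
    (h₁ : IsUnit ((fromCols Q₁ X₁).submatrix id e.symm))
    (h₂ : IsUnit ((fromCols Q₂ X₂).submatrix id e.symm)) :
    ∃ X : Matrix ι ν K, IsUnit ((fromCols Q₁ X).submatrix id e.symm) ∧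
      IsUnit ((fromCols Q₂ X).submatrix id e.symm) := by
  set D := (fromCols 0 (X₂ - X₁)).submatrix id e.symm
  have line : ∀ (Q : Matrix ι κ K) (t : K),
      (fromCols Q (X₁ + t • (X₂ - X₁))).submatrix id e.symm =
        (fromCols Q X₁).submatrix id e.symm + t • D :=
    fun Q t ↦ by rw [fromCols_add_smul]; rfl
  simp only [isUnit_iff_isUnit_det, isUnit_iff_ne_zero] at h₁ h₂ ⊢
  obtain ⟨t, ht⟩ := exists_det_add_smul_ne_zero_and
    (A₁ := (fromCols Q₁ X₁).submatrix id e.symm) (A₂ := (fromCols Q₂ X₁).submatrix id e.symm)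
    (B₁ := D) (B₂ := D) (s₁ := 0) (s₂ := 1)
    (by rwa [← line, zero_smul, add_zero]) (by rwa [← line, one_smul, add_sub_cancel])
  exact ⟨X₁ + t • (X₂ - X₁), by simpa only [line] using ht⟩

end Matrix

open Matrix in
theorem stmt_12 (n m : ℕ) (hm : m < n) (Q₁ Q₂ : Matrix (Fin n) (Fin m) ℝ)
    (hQ₁ : Q₁.rank = m) (hQ₂ : Q₂.rank = m) :
    ∃ X : Matrix (Fin n) (Fin (n - m)) ℝ,
      IsUnit ((Matrix.fromCols Q₁ X).submatrix id
        (finSumFinEquiv.trans (finCongr (Nat.add_sub_cancel' hm.le))).symm) ∧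
      IsUnit ((Matrix.fromCols Q₂ X).submatrix id
        (finSumFinEquiv.trans (finCongr (Nat.add_sub_cancel' hm.le))).symm) := by
  set e : Fin m ⊕ Fin (n - m) ≃ Fin n :=
    finSumFinEquiv.trans (finCongr (Nat.add_sub_cancel' hm.le))
  obtain ⟨X₁, h₁⟩ := exists_isUnit_fromCols_submatrix e (Q := Q₁) (by simpa using hQ₁)
  obtain ⟨X₂, h₂⟩ := exists_isUnit_fromCols_submatrix e (Q := Q₂) (by simpa using hQ₂)
  exact exists_isUnit_fromCols_submatrix_and e h₁ h₂
end

section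
/- Let Q, Q', P, P' be n×m real matrices of rank m with Q Pᵀ = Q' (P')ᵀ. Then there exists B ∈ GL(m,ℝ) such that Q' = QB and P' = P(Bᵀ)⁻¹. -/
/-!
Full column rank makes `Q` and `P'` left invertible. Cancelling `Q` on the left of
`Q Pᵀ = Q' P'ᵀ` gives `Pᵀ = B P'ᵀ` with `B = L Q'` for a left inverse `L` of `Q`, and then
cancelling `P'ᵀ` on the right gives `Q' = Q B`. Since `Q' = Q B` has rank `m`, so does `B`.
-/

open Matrix

namespace Matrix

variable {K : Type*} [Field K] {l m : Type*} [Fintype l] [Fintype m] [DecidableEq m]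

omit [DecidableEq m] in
theorem mulVec_surjective_of_rank_eq_card_height {A : Matrix m l K}
    (hA : A.rank = Fintype.card m) : Function.Surjective A.mulVec := by
  rw [← coe_mulVecLin, ← LinearMap.range_eq_top]
  exact Submodule.eq_top_of_finrank_eq (by rw [Module.finrank_fintype_fun_eq_card]; exact hA)

theorem isUnit_of_rank_eq_card {A : Matrix m m K} (hA : A.rank = Fintype.card m) : IsUnit A :=
  mulVec_surjective_iff_isUnit.mp (mulVec_surjective_of_rank_eq_card_height hA)

theorem exists_mul_eq_one_of_rank_eq_card_width {A : Matrix l m K}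
    (hA : A.rank = Fintype.card m) : ∃ B : Matrix m l K, B * A = 1 := by
  obtain ⟨B, hB⟩ := mulVec_surjective_iff_exists_right_inverse.mp
    (mulVec_surjective_of_rank_eq_card_height (A := Aᵀ) (by rwa [rank_transpose]))
  exact ⟨Bᵀ, by rw [← transpose_transpose (Bᵀ * A), transpose_mul, transpose_transpose, hB,
    transpose_one]⟩

theorem exists_eq_mul_of_mul_transpose_eq {Q Q' P P' : Matrix l m K}
    (hQ : Q.rank = Fintype.card m) (hP' : P'.rank = Fintype.card m) (h : Q * Pᵀ = Q' * P'ᵀ) :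
    ∃ B : Matrix m m K, Q' = Q * B ∧ Pᵀ = B * P'ᵀ := by
  obtain ⟨L, hL⟩ := exists_mul_eq_one_of_rank_eq_card_width hQ
  obtain ⟨R, hR⟩ := exists_mul_eq_one_of_rank_eq_card_width hP'
  have hRT : P'ᵀ * Rᵀ = 1 := by rw [← transpose_mul, hR, transpose_one]
  have hP : Pᵀ = L * Q' * P'ᵀ := by
    rw [← Matrix.one_mul Pᵀ, ← hL, Matrix.mul_assoc, h, ← Matrix.mul_assoc]
  refine ⟨L * Q', ?_, hP⟩
  calc Q' = Q' * P'ᵀ * Rᵀ := by rw [Matrix.mul_assoc, hRT, Matrix.mul_one]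
    _ = Q * (L * Q') * (P'ᵀ * Rᵀ) := by rw [← h, hP]; simp only [Matrix.mul_assoc]
    _ = Q * (L * Q') := by rw [hRT, Matrix.mul_one]

end Matrix

theorem stmt_14_general (n m : ℕ) (Q Q' P P' : Matrix (Fin n) (Fin m) ℝ)
    (hQ : Q.rank = m) (hQ' : Q'.rank = m) (hP' : P'.rank = m)
    (h : Q * Pᵀ = Q' * P'ᵀ) :
    ∃ B : Matrix (Fin m) (Fin m) ℝ, IsUnit B ∧ Q' = Q * B ∧ P' = P * (Bᵀ)⁻¹ := by
  obtain ⟨B, hQB, hPB⟩ :=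
    exists_eq_mul_of_mul_transpose_eq (by simpa using hQ) (by simpa using hP') h
  have hB : IsUnit B := by
    refine isUnit_of_rank_eq_card (le_antisymm (rank_le_card_width B) ?_)
    calc Fintype.card (Fin m) = Q'.rank := by simpa using hQ'.symm
      _ ≤ B.rank := hQB ▸ rank_mul_le_right Q B
  refine ⟨B, hB, hQB, ?_⟩
  have hBT : IsUnit Bᵀ.det := by rwa [det_transpose, ← isUnit_iff_isUnit_det]
  rw [← transpose_transpose P, hPB, transpose_mul, transpose_transpose,
    mul_nonsing_inv_cancel_right _ _ hBT]

theorem stmt_14 (n m : ℕ) (Q Q' P P' : Matrix (Fin n) (Fin m) ℝ)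
    (hQ : Q.rank = m) (hQ' : Q'.rank = m) (hP : P.rank = m) (hP' : P'.rank = m)
    (h : Q * Pᵀ = Q' * P'ᵀ) :
    ∃ B : Matrix (Fin m) (Fin m) ℝ, IsUnit B ∧ Q' = Q * B ∧ P' = P * (Bᵀ)⁻¹ :=
  stmt_14_general n m Q Q' P P' hQ hQ' hP' h
end

section
/- Let Q, Q', P, P' be n×m real matrices of rank m with Qᵀ P = (Q')ᵀ P'. Then there exists A ∈ GL(n,ℝ) such that Q' = AQ and P = Aᵀ P'. -/
/-!
Read `Q, Q'` as injective maps `q, q' : ℝᵐ → ℝⁿ` and `Pᵀ, P'ᵀ` as surjective maps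
`t, t' : ℝⁿ → ℝᵐ`; the hypothesis says `t ∘ q = t' ∘ q'`, and we need an automorphism `f` of `ℝⁿ`
with `f ∘ q = q'` and `t' ∘ f = t`. Let `N = ker (t ∘ q)` and `X` a complement of `N`. As `t ∘ q`
is injective on `X`, there are sections `s, s'` of `t, t'` with `s ∘ t ∘ q = q` and
`s' ∘ t' ∘ q' = q'` on `X`. The kernels of `t` and `t'` have the same dimension and contain the
copies `q N` and `q' N` of `N`, so some isomorphism `γ : ker t ≃ ker t'` carries `q` to `q'` on `N`.
Under the splittings `ℝⁿ = s ℝᵐ ⊕ ker t = s' ℝᵐ ⊕ ker t'`, the map `f = s' ⊕ γ` works.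
-/

open Matrix Module

namespace LinearMap

variable {K U V W : Type*} [Field K] [AddCommGroup U] [Module K U] [AddCommGroup V] [Module K V]
  [AddCommGroup W] [Module K W]

theorem exists_rightInverse_comp_eq (t : W →ₗ[K] V) (ht : Function.Surjective t) (u : U →ₗ[K] W)
    (hu : Function.Injective (t ∘ₗ u)) :
    ∃ s : V →ₗ[K] W, t ∘ₗ s = id ∧ s ∘ₗ t ∘ₗ u = u := by
  obtain ⟨s₀, hs₀⟩ := t.exists_rightInverse_of_surjective (range_eq_top.2 ht)
  obtain ⟨l, hl⟩ := (t ∘ₗ u).exists_leftInverse_of_injective (ker_eq_bot.2 hu)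
  -- `t` kills the correction term, which on `range (t ∘ u)` trades `s₀` for `u ∘ l`
  refine ⟨s₀ + (u - s₀ ∘ₗ t ∘ₗ u) ∘ₗ l, ?_, ?_⟩
  · simp only [comp_add, comp_sub, ← comp_assoc, hs₀, id_comp, sub_self, zero_comp, add_zero]
  · calc (s₀ + (u - s₀ ∘ₗ t ∘ₗ u) ∘ₗ l) ∘ₗ t ∘ₗ u
        = s₀ ∘ₗ t ∘ₗ u + (u - s₀ ∘ₗ t ∘ₗ u) ∘ₗ (l ∘ₗ t ∘ₗ u) := by
          simp only [add_comp, comp_assoc]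
      _ = u := by rw [hl, comp_id, add_sub_cancel]

theorem finrank_ker_eq_of_surjective [FiniteDimensional K W] {t t' : W →ₗ[K] V}
    (ht : Function.Surjective t) (ht' : Function.Surjective t') :
    finrank K (ker t) = finrank K (ker t') := by
  have h := t.finrank_range_add_finrank_ker
  have h' := t'.finrank_range_add_finrank_ker
  rw [range_eq_top.2 ht, finrank_top] at h
  rw [range_eq_top.2 ht', finrank_top] at h'
  omega

end LinearMap

namespace LinearEquiv

variable {K N E F : Type*} [Field K] [AddCommGroup N] [Module K N] [AddCommGroup E] [Module K E]
  [AddCommGroup F] [Module K F] [FiniteDimensional K E] [FiniteDimensional K F]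

theorem exists_comp_eq_of_injective (a : N →ₗ[K] E) (b : N →ₗ[K] F)
    (ha : Function.Injective a) (hb : Function.Injective b) (hEF : finrank K E = finrank K F) :
    ∃ e : E ≃ₗ[K] F, e ∘ₗ a = b := by
  obtain ⟨C, hC⟩ := Submodule.exists_isCompl (LinearMap.range a)
  obtain ⟨C', hC'⟩ := Submodule.exists_isCompl (LinearMap.range b)
  have hCC' : finrank K C = finrank K C' := by
    have := Submodule.finrank_add_eq_of_isCompl hC
    have := Submodule.finrank_add_eq_of_isCompl hC'
    have := LinearMap.finrank_range_of_inj ha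
    have := LinearMap.finrank_range_of_inj hb
    omega
  let e : E ≃ₗ[K] F := (Submodule.prodEquivOfIsCompl _ _ hC).symm ≪≫ₗ
    ((ofInjective a ha).symm ≪≫ₗ ofInjective b hb).prodCongr (ofFinrankEq C C' hCC') ≪≫ₗ
    Submodule.prodEquivOfIsCompl _ _ hC'
  refine ⟨e, LinearMap.ext fun x => ?_⟩
  have hx : (Submodule.prodEquivOfIsCompl _ _ hC).symm (a x) = (ofInjective a ha x, 0) :=
    Submodule.prodEquivOfIsCompl_symm_apply_left _ _ hC (ofInjective a ha x)
  simp [e, hx]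

end LinearEquiv

namespace LinearMap

variable {K V W : Type*} [Field K] [AddCommGroup V] [Module K V] [AddCommGroup W] [Module K W]
  [FiniteDimensional K W]

theorem exists_linearEquiv_of_rightInverse {t t' : W →ₗ[K] V} {s s' : V →ₗ[K] W}
    (hs : t ∘ₗ s = id) (hs' : t' ∘ₗ s' = id) (γ : ker t ≃ₗ[K] ker t') :
    ∃ f : W ≃ₗ[K] W, t' ∘ₗ f = t ∧ f ∘ₗ s = s' ∧ ∀ v : ker t, f v = γ v := by
  have hst : ∀ w, w - s (t w) ∈ ker t := fun w => by simp [← comp_apply t s, hs]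
  let ρ : W →ₗ[K] ker t := (id - s ∘ₗ t).codRestrict (ker t) hst
  have hρ : ∀ v : ker t, ρ v = v := fun v => by ext; simp [ρ, mem_ker.1 v.2]
  have hρs : ρ ∘ₗ s = 0 := by ext; simp [ρ, ← comp_apply t s, hs]
  -- `w ↦ (t w, ρ w)` identifies `W` with `V × ker t`
  let f₀ : W →ₗ[K] W := s' ∘ₗ t + (ker t').subtype ∘ₗ γ.toLinearMap ∘ₗ ρ
  have ht'f₀ : t' ∘ₗ f₀ = t := by
    ext w
    simp [f₀, ← comp_apply t' s', hs']
  have hf₀ : Function.Injective f₀ := by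
    rw [← ker_eq_bot, Submodule.eq_bot_iff]
    intro w hw
    have htw : t w = 0 := by rw [← ht'f₀, comp_apply, mem_ker.1 hw, map_zero]
    have hγw : γ ⟨w, htw⟩ = 0 := by
      ext
      simpa [f₀, htw, hρ ⟨w, htw⟩] using mem_ker.1 hw
    simpa using congrArg Subtype.val (γ.map_eq_zero_iff.1 hγw)
  refine ⟨.ofInjectiveEndo f₀ hf₀, ht'f₀, ?_, fun v => ?_⟩
  · ext x
    simp [f₀, ← comp_apply t s, hs, ← comp_apply ρ s, hρs]
  · simp [f₀, mem_ker.1 v.2, hρ v]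

theorem exists_linearEquiv_of_comp_eq {q q' : V →ₗ[K] W} {t t' : W →ₗ[K] V}
    (hq : Function.Injective q) (hq' : Function.Injective q') (ht : Function.Surjective t)
    (ht' : Function.Surjective t') (h : t ∘ₗ q = t' ∘ₗ q') :
    ∃ f : W ≃ₗ[K] W, f ∘ₗ q = q' ∧ t' ∘ₗ f = t := by
  obtain ⟨X, hX⟩ := (ker (t ∘ₗ q)).exists_isCompl
  obtain ⟨s, hts, hs⟩ := t.exists_rightInverse_comp_eq ht (q.domRestrict X)
    (injective_domRestrict_iff.2 hX.disjoint.symm)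
  obtain ⟨s', hts', hs'⟩ := t'.exists_rightInverse_comp_eq ht' (q'.domRestrict X)
    (injective_domRestrict_iff.2 (h ▸ hX.disjoint.symm))
  have hqN : ∀ x ∈ ker (t ∘ₗ q), q x ∈ ker t := fun x hx => hx
  have hq'N : ∀ x ∈ ker (t ∘ₗ q), q' x ∈ ker t' := fun x hx => by
    simpa only [mem_ker, ← comp_apply, h] using hx
  obtain ⟨γ, hγ⟩ := LinearEquiv.exists_comp_eq_of_injective (q.restrict hqN) (q'.restrict hq'N)
    (.of_comp (f := Subtype.val) (hq.comp Subtype.val_injective))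
    (.of_comp (f := Subtype.val) (hq'.comp Subtype.val_injective))
    (finrank_ker_eq_of_surjective ht ht')
  obtain ⟨f, ht'f, hfs, hfγ⟩ := exists_linearEquiv_of_rightInverse hts hts' γ
  refine ⟨f, ext_on_codisjoint hX.codisjoint (fun x hx => ?_) (fun x hx => ?_), ht'f⟩
  · calc f (q x) = γ ⟨q x, hx⟩ := hfγ ⟨q x, hx⟩
      _ = q' x := congrArg Subtype.val (LinearMap.congr_fun hγ ⟨x, hx⟩)
  · calc f (q x) = f (s (t (q x))) := congrArg f (LinearMap.congr_fun hs ⟨x, hx⟩).symm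
      _ = s' (t' (q' x)) := by rw [← comp_apply t q, h]; exact LinearMap.congr_fun hfs _
      _ = q' x := LinearMap.congr_fun hs' ⟨x, hx⟩

end LinearMap

namespace Matrix

variable {K m n : Type*} [Field K] [Fintype n]

theorem injective_mulVecLin_of_rank_eq {A : Matrix m n K} (hA : A.rank = Fintype.card n) :
    Function.Injective A.mulVecLin := by
  have h := A.mulVecLin.finrank_range_add_finrank_ker
  rw [← rank, hA, finrank_fintype_fun_eq_card] at h
  rw [← LinearMap.ker_eq_bot, ← Submodule.finrank_eq_zero]
  omega

theorem surjective_mulVecLin_of_rank_eq [Fintype m] {A : Matrix m n K}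
    (hA : A.rank = Fintype.card m) :
    Function.Surjective A.mulVecLin := by
  rw [← LinearMap.range_eq_top]
  apply Submodule.eq_top_of_finrank_eq
  rw [← rank, hA, finrank_fintype_fun_eq_card]

theorem exists_isUnit_of_transpose_mul_eq [Fintype m] [DecidableEq n] {Q Q' P P' : Matrix n m K}
    (hQ : Q.rank = Fintype.card m) (hQ' : Q'.rank = Fintype.card m)
    (hP : P.rank = Fintype.card m) (hP' : P'.rank = Fintype.card m) (h : Qᵀ * P = Q'ᵀ * P') :
    ∃ A : Matrix n n K, IsUnit A ∧ Q' = A * Q ∧ P = Aᵀ * P' := by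
  classical
  have hPQ : Pᵀ.mulVecLin ∘ₗ Q.mulVecLin = P'ᵀ.mulVecLin ∘ₗ Q'.mulVecLin := by
    rw [← mulVecLin_mul, ← mulVecLin_mul, ← transpose_transpose (Pᵀ * Q), transpose_mul,
      transpose_transpose, h, transpose_mul, transpose_transpose]
  obtain ⟨f, hfQ, hPf⟩ := LinearMap.exists_linearEquiv_of_comp_eq
    (injective_mulVecLin_of_rank_eq hQ) (injective_mulVecLin_of_rank_eq hQ')
    (surjective_mulVecLin_of_rank_eq (by rwa [rank_transpose]))
    (surjective_mulVecLin_of_rank_eq (by rwa [rank_transpose])) hPQ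
  refine ⟨LinearMap.toMatrix' f, LinearMap.isUnit_toMatrix'_iff.2
    ((Module.End.isUnit_iff _).2 f.bijective), ?_, ?_⟩
  · apply toLin'.injective
    rw [toLin'_mul, toLin'_toMatrix', toLin'_apply', toLin'_apply', hfQ]
  · rw [← transpose_transpose P, ← transpose_transpose P', ← transpose_mul]
    congr 1
    apply toLin'.injective
    rw [toLin'_mul, toLin'_toMatrix', toLin'_apply', toLin'_apply', hPf]

end Matrix

theorem stmt_15_general (n m : ℕ) (Q Q' P P' : Matrix (Fin n) (Fin m) ℝ)
    (hQ : Q.rank = m) (hQ' : Q'.rank = m) (hP : P.rank = m) (hP' : P'.rank = m)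
    (h : Qᵀ * P = Q'ᵀ * P') :
    ∃ A : Matrix (Fin n) (Fin n) ℝ, IsUnit A ∧ Q' = A * Q ∧ P = Aᵀ * P' := by
  refine Matrix.exists_isUnit_of_transpose_mul_eq ?_ ?_ ?_ ?_ h <;> rwa [Fintype.card_fin]

theorem stmt_15 (n m : ℕ) (hm : m ≤ n) (Q Q' P P' : Matrix (Fin n) (Fin m) ℝ)
    (hQ : Q.rank = m) (hQ' : Q'.rank = m) (hP : P.rank = m) (hP' : P'.rank = m)
    (h : Qᵀ * P = Q'ᵀ * P') :
    ∃ A : Matrix (Fin n) (Fin n) ℝ, IsUnit A ∧ Q' = A * Q ∧ P = Aᵀ * P' :=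
  stmt_15_general n m Q Q' P P' hQ hQ' hP hP' h
end

section
/- Every m×m real matrix ξ with rank ξ ≥ 2m − n (for some n ≥ m) can be written as ξ = Pᵀ Q for some n×m real matrices Q, P each of rank m. -/
/-!
Factor `ξ` through `ℝⁿ ≅ ℝᵐ × W × ℝᵈ`, where `W` is a complement of the column space of `ξ`:
`Q` is the inclusion of the first factor and `Pᵀ = [ξ | ι_W | 0]`, which is onto because
`range ξ ⊕ W = ℝᵐ`. This fits inside `ℝⁿ` exactly when `m + (m - rank ξ) ≤ n`.
-/

open Matrix Module LinearMap

theorem LinearMap.exists_injective_surjective_comp_eq {K E F H : Type*} [Field K]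
    [AddCommGroup E] [Module K E] [FiniteDimensional K E]
    [AddCommGroup F] [Module K F] [FiniteDimensional K F]
    [AddCommGroup H] [Module K H] [FiniteDimensional K H]
    (f : E →ₗ[K] F) (hdim : finrank K F + finrank K E ≤ finrank K (range f) + finrank K H) :
    ∃ (q : E →ₗ[K] H) (p : H →ₗ[K] F),
      Function.Injective q ∧ Function.Surjective p ∧ p ∘ₗ q = f := by
  obtain ⟨W, hW⟩ := (range f).exists_isCompl
  have hW_dim := Submodule.finrank_add_eq_of_isCompl hW
  have hrange_le : finrank K (range f) ≤ finrank K F := Submodule.finrank_le _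
  let Z := Fin (finrank K H - finrank K E - finrank K W) → K
  let e : (E × W × Z) ≃ₗ[K] H := LinearEquiv.ofFinrankEq _ _ (by
    simp only [Z, finrank_prod, finrank_fin_fun]
    omega)
  let p₀ : E × W × Z →ₗ[K] F := f.coprod (W.subtype ∘ₗ fst K W Z)
  have hp₀ : Function.Surjective p₀ := by
    rw [← range_eq_top, range_coprod, range_comp_of_range_eq_top _ Submodule.range_fst,
      Submodule.range_subtype]
    exact hW.sup_eq_top
  refine ⟨e ∘ₗ inl K E (W × Z), p₀ ∘ₗ e.symm, e.injective.comp inl_injective,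
    hp₀.comp e.symm.surjective, ?_⟩
  ext x
  simp [p₀]

theorem LinearMap.rank_toMatrix'_of_injective {K ι κ : Type*} [Field K] [Fintype ι] [Fintype κ]
    [DecidableEq κ] {q : (κ → K) →ₗ[K] ι → K} (hq : Function.Injective q) :
    (toMatrix' q).rank = Fintype.card κ := by
  rw [Matrix.rank, ← Matrix.toLin'_apply', Matrix.toLin'_toMatrix', finrank_range_of_inj hq,
    finrank_fintype_fun_eq_card]

theorem LinearMap.rank_toMatrix'_of_surjective {K ι κ : Type*} [Field K] [Fintype ι] [Fintype κ]
    [DecidableEq κ] {p : (κ → K) →ₗ[K] ι → K} (hp : Function.Surjective p) :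
    (toMatrix' p).rank = Fintype.card ι := by
  rw [Matrix.rank, ← Matrix.toLin'_apply', Matrix.toLin'_toMatrix', range_eq_top.mpr hp,
    finrank_top, finrank_fintype_fun_eq_card]

theorem Matrix.exists_transpose_mul_eq_of_card_add_card_le {K ι κ η : Type*} [Field K]
    [Fintype ι] [Fintype κ] [Fintype η] [DecidableEq κ] [DecidableEq η] (ξ : Matrix ι κ K)
    (hdim : Fintype.card ι + Fintype.card κ ≤ ξ.rank + Fintype.card η) :
    ∃ Q : Matrix η κ K, ∃ P : Matrix η ι K,
      Q.rank = Fintype.card κ ∧ P.rank = Fintype.card ι ∧ ξ = Pᵀ * Q := by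
  obtain ⟨q, p, hq, hp, hpq⟩ := (toLin' ξ).exists_injective_surjective_comp_eq (H := η → K) (by
    simp only [finrank_fintype_fun_eq_card, Matrix.toLin'_apply']
    exact hdim)
  refine ⟨toMatrix' q, (toMatrix' p)ᵀ, rank_toMatrix'_of_injective hq, ?_, ?_⟩
  · rw [rank_transpose, rank_toMatrix'_of_surjective hp]
  · rw [transpose_transpose, ← toMatrix'_comp, hpq, toMatrix'_toLin']

theorem stmt_19_general (n m : ℕ) (ξ : Matrix (Fin m) (Fin m) ℝ)
    (hξ : 2 * m - n ≤ ξ.rank) :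
    ∃ Q P : Matrix (Fin n) (Fin m) ℝ, Q.rank = m ∧ P.rank = m ∧ ξ = Pᵀ * Q := by
  simpa using ξ.exists_transpose_mul_eq_of_card_add_card_le (η := Fin n) (by simp; omega)

theorem stmt_19 (n m : ℕ) (hm : m ≤ n) (ξ : Matrix (Fin m) (Fin m) ℝ)
    (hξ : 2 * m - n ≤ ξ.rank) :
    ∃ Q P : Matrix (Fin n) (Fin m) ℝ, Q.rank = m ∧ P.rank = m ∧ ξ = Pᵀ * Q :=
  stmt_19_general n m ξ hξ
end
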